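/- arXiv:1709.09993 — 6 statements merged into one kernel-verified Lean document; each statement's English description precedes it below -/
import Mathlib

section
/- Suppose U, W : ℂ → ℂ are nowhere-vanishing functions satisfying U(z₁−z₂)·W(z₂−z₃) + W(z₁−z₃)·W(z₂−z₃) = U(z₁−z₂)·W(z₁−z₃) for all admissible z₁,z₂,z₃, where U(z) = ħ/z for a fixed nonzero constant ħ. Then there is a constant b such that W(z) = −ħ/(z − ħ·b). -/
/-!
Putting `z₃ = 0` and dividing the Yang–Baxter constraint by `U(z₁ - z₂) W(z₁) W(z₂)` shows that
`1 / W z + z / ħ` takes the same value `b` at every `z ≠ 0`; solving for `W z` gives the claim.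
-/

section Field

variable {K : Type*} [Field K]

theorem inv_add_div_eq_of_yangBaxter {ħ x y u v : K} (hħ : ħ ≠ 0) (hxy : x ≠ y)
    (hu : u ≠ 0) (hv : v ≠ 0) (h : ħ / (x - y) * v + u * v = ħ / (x - y) * u) :
    u⁻¹ + x / ħ = v⁻¹ + y / ħ := by
  have hxy' : x - y ≠ 0 := sub_ne_zero.mpr hxy
  field_simp at h ⊢
  linear_combination h

theorem eq_neg_div_sub_of_inv_add_div_eq {ħ z u b : K} (hħ : ħ ≠ 0) (hu : u ≠ 0)
    (h : u⁻¹ + z / ħ = b) : u = -ħ / (z - ħ * b) := by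
  have hden : z - ħ * b = -ħ / u := by
    rw [← h]
    field_simp
    ring
  rw [hden, div_div_cancel₀ (neg_ne_zero.mpr hħ)]

end Field

/-- If `U, W : ℂ → ℂ` are nowhere vanishing on the nonzero complex numbers, `U z = ħ / z`
for a fixed nonzero constant `ħ`, and the Yang–Baxter constraint
`U(z₁−z₂)·W(z₂−z₃) + W(z₁−z₃)·W(z₂−z₃) = U(z₁−z₂)·W(z₁−z₃)` holds for all admissible
`z₁, z₂, z₃`, then there is a constant `b` with `W z = −ħ/(z − ħ·b)`. -/
theorem yang_baxter_dual_ratio (hbar : ℂ) (hhbar : hbar ≠ 0) (U W : ℂ → ℂ)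
    (hUdef : ∀ z : ℂ, U z = hbar / z)
    (hWne : ∀ z : ℂ, z ≠ 0 → W z ≠ 0)
    (hYB : ∀ z₁ z₂ z₃ : ℂ, z₁ ≠ z₂ → z₁ ≠ z₃ → z₂ ≠ z₃ →
      U (z₁ - z₂) * W (z₂ - z₃) + W (z₁ - z₃) * W (z₂ - z₃)
        = U (z₁ - z₂) * W (z₁ - z₃)) :
    ∃ b : ℂ, ∀ z : ℂ, z ≠ 0 → W z = -hbar / (z - hbar * b) := by
  have hconst : ∀ x y : ℂ, x ≠ 0 → y ≠ 0 → (W x)⁻¹ + x / hbar = (W y)⁻¹ + y / hbar := by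
    intro x y hx hy
    rcases eq_or_ne x y with rfl | hxy
    · rfl
    refine inv_add_div_eq_of_yangBaxter hhbar hxy (hWne x hx) (hWne y hy) ?_
    simpa only [hUdef, sub_zero] using hYB x y 0 hxy hx hy
  exact ⟨(W 1)⁻¹ + 1 / hbar, fun z hz =>
    eq_neg_div_sub_of_inv_add_div_eq hhbar (hWne z hz) (hconst z 1 hz one_ne_zero)⟩
end

section
/- Suppose X, Y : ℂ → ℂ are functions with X(z) = ħ/z (ħ ≠ 0) and Y nowhere vanishing satisfying Y(z₁−z₃)·X(z₂−z₃) = Y(z₁−z₂)·Y(z₁−z₃) + Y(z₁−z₂)·X(z₂−z₃), together with the unitarity relation N·Y(z)·Y(−z) + Y(z) + Y(−z) + X(z)·Y(−z) + X(−z)·Y(z) = 0. Then Y(z) = −ħ/(z + (N−2)ħ/2). -/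
/-!
Putting `z₃ = 0` in the Yang–Baxter relation and dividing by `Y(z₁ - z₂) Y(z₁)` shows that
`ħ / Y z + z` takes the same value `a` at every `z ≠ 0`, so `Y z = ħ / (a - z)`. Substituting
this into unitarity at `z = 1` and clearing denominators leaves `2a + (N - 2)ħ = 0`.
-/

section

variable {K : Type*} [Field K] {hbar : K} {X Y : K → K}

theorem yangBaxter_at_zero (hX : ∀ z, X z = hbar / z)
    (hYB : ∀ z₁ z₂ z₃ : K, z₁ ≠ z₂ → z₁ ≠ z₃ → z₂ ≠ z₃ →
      Y (z₁ - z₃) * X (z₂ - z₃) = Y (z₁ - z₂) * Y (z₁ - z₃) + Y (z₁ - z₂) * X (z₂ - z₃))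
    {u v : K} (hu : u ≠ 0) (hv : v ≠ 0) (huv : u ≠ v) :
    hbar * Y v = (v - u) * (Y u * Y v) + hbar * Y u := by
  have hvu : v - u ≠ 0 := sub_ne_zero.mpr huv.symm
  have h := hYB v (v - u) 0 (fun h => hu (by linear_combination h)) hv hvu
  simp only [sub_zero, sub_sub_cancel, hX] at h
  field_simp at h
  linear_combination h

theorem div_add_self_eq_of_yangBaxter (hX : ∀ z, X z = hbar / z)
    (hYne : ∀ z, z ≠ 0 → Y z ≠ 0)
    (hYB : ∀ z₁ z₂ z₃ : K, z₁ ≠ z₂ → z₁ ≠ z₃ → z₂ ≠ z₃ →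
      Y (z₁ - z₃) * X (z₂ - z₃) = Y (z₁ - z₂) * Y (z₁ - z₃) + Y (z₁ - z₂) * X (z₂ - z₃))
    {u v : K} (hu : u ≠ 0) (hv : v ≠ 0) :
    hbar / Y u + u = hbar / Y v + v := by
  rcases eq_or_ne u v with rfl | huv
  · rfl
  have h := yangBaxter_at_zero hX hYB hu hv huv
  have hYu := hYne u hu
  have hYv := hYne v hv
  field_simp
  linear_combination h

theorem exists_eq_div_sub_of_yangBaxter (hhbar : hbar ≠ 0) (hX : ∀ z, X z = hbar / z)
    (hYne : ∀ z, z ≠ 0 → Y z ≠ 0)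
    (hYB : ∀ z₁ z₂ z₃ : K, z₁ ≠ z₂ → z₁ ≠ z₃ → z₂ ≠ z₃ →
      Y (z₁ - z₃) * X (z₂ - z₃) = Y (z₁ - z₂) * Y (z₁ - z₃) + Y (z₁ - z₂) * X (z₂ - z₃)) :
    ∃ a : K, ∀ z, z ≠ 0 → a - z ≠ 0 ∧ Y z = hbar / (a - z) := by
  refine ⟨hbar / Y 1 + 1, fun z hz => ?_⟩
  have hYz := hYne z hz
  rw [div_add_self_eq_of_yangBaxter hX hYne hYB one_ne_zero hz, add_sub_cancel_right]
  exact ⟨div_ne_zero hhbar hYz, by rw [div_div_cancel₀ hhbar]⟩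

theorem two_mul_add_eq_zero_of_unitarity (n a : K) (hhbar : hbar ≠ 0)
    (hX : ∀ z, X z = hbar / z) (hY : ∀ z, z ≠ 0 → a - z ≠ 0 ∧ Y z = hbar / (a - z))
    (hUnit : n * Y 1 * Y (-1) + Y 1 + Y (-1) + X 1 * Y (-1) + X (-1) * Y 1 = 0) :
    2 * a + (n - 2) * hbar = 0 := by
  obtain ⟨ha₁, hY₁⟩ := hY 1 one_ne_zero
  obtain ⟨ha₂, hY₂⟩ := hY (-1) (neg_ne_zero.mpr one_ne_zero)
  rw [sub_neg_eq_add] at ha₂ hY₂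
  rw [hX, hX, hY₁, hY₂] at hUnit
  field_simp at hUnit
  apply mul_left_cancel₀ hhbar
  linear_combination hUnit

end

theorem so_N_ratio_general (N : ℕ) (hbar : ℂ) (hhbar : hbar ≠ 0)
    (X Y : ℂ → ℂ)
    (hX : ∀ z : ℂ, X z = hbar / z)
    (hYne : ∀ z : ℂ, z ≠ 0 → Y z ≠ 0)
    (hYB : ∀ z₁ z₂ z₃ : ℂ, z₁ ≠ z₂ → z₁ ≠ z₃ → z₂ ≠ z₃ →
      Y (z₁ - z₃) * X (z₂ - z₃)
        = Y (z₁ - z₂) * Y (z₁ - z₃) + Y (z₁ - z₂) * X (z₂ - z₃))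
    (hUnit : ∀ z : ℂ, z ≠ 0 →
      (N : ℂ) * Y z * Y (-z) + Y z + Y (-z) + X z * Y (-z) + X (-z) * Y z = 0) :
    ∀ z : ℂ, z ≠ 0 → z + ((N : ℂ) - 2) * hbar / 2 ≠ 0 →
      Y z = -hbar / (z + ((N : ℂ) - 2) * hbar / 2) := by
  obtain ⟨a, hY⟩ := exists_eq_div_sub_of_yangBaxter hhbar hX hYne hYB
  have ha := two_mul_add_eq_zero_of_unitarity (N : ℂ) a hhbar hX hY (hUnit 1 one_ne_zero)
  intro z hz _
  have hsub : a - z = -(z + ((N : ℂ) - 2) * hbar / 2) := by linear_combination (1 / 2 : ℂ) * ha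
  rw [(hY z hz).2, hsub, div_neg, neg_div]

/-- For the `SO(N)` rational R-matrix ratios: if `X z = ħ/z` (with `ħ ≠ 0`), `Y` is nowhere
vanishing, the Yang–Baxter constraint
`Y(z₁−z₃)·X(z₂−z₃) = Y(z₁−z₂)·Y(z₁−z₃) + Y(z₁−z₂)·X(z₂−z₃)` holds, together with the
unitarity relation `N·Y(z)·Y(−z) + Y(z) + Y(−z) + X(z)·Y(−z) + X(−z)·Y(z) = 0`, then
`Y z = −ħ/(z + (N−2)·ħ/2)`. -/
theorem so_N_ratio (N : ℕ) (hN : 1 ≤ N) (hbar : ℂ) (hhbar : hbar ≠ 0)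
    (X Y : ℂ → ℂ)
    (hX : ∀ z : ℂ, X z = hbar / z)
    (hYne : ∀ z : ℂ, z ≠ 0 → Y z ≠ 0)
    (hYB : ∀ z₁ z₂ z₃ : ℂ, z₁ ≠ z₂ → z₁ ≠ z₃ → z₂ ≠ z₃ →
      Y (z₁ - z₃) * X (z₂ - z₃)
        = Y (z₁ - z₂) * Y (z₁ - z₃) + Y (z₁ - z₂) * X (z₂ - z₃))
    (hUnit : ∀ z : ℂ, z ≠ 0 →
      (N : ℂ) * Y z * Y (-z) + Y z + Y (-z) + X z * Y (-z) + X (-z) * Y z = 0) :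
    ∀ z : ℂ, z ≠ 0 → z + ((N : ℂ) - 2) * hbar / 2 ≠ 0 →
      Y z = -hbar / (z + ((N : ℂ) - 2) * hbar / 2) :=
  so_N_ratio_general N hbar hhbar X Y hX hYne hYB hUnit
end

section
/- Let g be a Lie algebra with structure constants f_{ab}^c relative to a basis t_a, and let ρ', ρ'' be representations of g on V', V''. Define operators on V'⊗V'' by t_{a,0} = t'_a⊗1 + 1⊗t''_a and t_{a,1} = −(ħ/2)·∑_{b,c} f_{abc}·t'_b⊗t''_c. Then in general the Jacobi-type identity f_{uva}[t_{a,1}, t_{b,1}] + f_{vba}[t_{a,1}, t_{u,1}] + f_{bua}[t_{a,1}, t_{v,1}] = 0 fails; equivalently, the assignment t_a z⁰ ↦ t_{a,0}, t_a z¹ ↦ t_{a,1}, t_a zⁿ ↦ 0 (n ≥ 2) does not in general define a Lie algebra representation of g[z]. -/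
open scoped Kronecker BigOperators

/-- The one-loop corrected level-one generator on `V' ⊗ V''`:
`t_{a,1} = −(ħ/2)·∑_{b,c} f_{abc}·ρ'(t_b) ⊗ ρ''(t_c)`. -/
noncomputable def levelOne {n m : ℕ} (hbar : ℂ) (f : Fin n → Fin n → Fin n → ℂ)
    (ρ' ρ'' : Fin n → Matrix (Fin m) (Fin m) ℂ) (a : Fin n) :
    Matrix (Fin m × Fin m) (Fin m × Fin m) ℂ :=
  (-(hbar / 2)) • ∑ b, ∑ c, f a b c • (ρ' b ⊗ₖ ρ'' c)

/-!
For `sl₂` (structure constants `ε_{abc}`) the combination vanishes identically: for distinct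
`u, v, b` every term is a commutator of some `t_{a,1}` with itself, and for repeated indices the
terms cancel by antisymmetry. So the counterexample lives on a simple Lie algebra of rank two:
`so(5)` with basis `L_{ij} = E_{ij} - E_{ji}` (`i < j`) and `V' = V'' = ℂ⁵` its vector
representation.

Everything is defined over `ℤ` and base-changed to `ℂ`. The structure constants are the
coordinates of commutators `⁅L_a, L_b⁆` in the basis `L_c`, so their Jacobi identity is inherited
from that of matrices. Since `t_{a,1}` is `-ħ/2` times an integral matrix, the Jacobi-type
combination is `ħ²/4` times an integral matrix, whose `((0,1),(2,3))` entry is computed to be `1`.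
-/

open Finset Matrix

section StructureConstants

variable {R A : Type*} [CommRing R] [LieRing A] [LieAlgebra R A] {n : ℕ}

def structureConstants (L : Fin n → A) (coord : Fin n → A →ₗ[R] R) (a b c : Fin n) : R :=
  coord c ⁅L a, L b⁆

variable (L : Fin n → A) (coord : Fin n → A →ₗ[R] R)

theorem structureConstants_swap (a b c : Fin n) :
    structureConstants L coord a b c = -structureConstants L coord b a c := by
  rw [structureConstants, structureConstants, ← lie_skew, map_neg]

theorem structureConstants_jacobi
    (hL : ∀ a b, ⁅L a, L b⁆ = ∑ c, structureConstants L coord a b c • L c) (u v w e : Fin n) :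
    ∑ a, (structureConstants L coord u v a * structureConstants L coord a w e
      + structureConstants L coord v w a * structureConstants L coord a u e
      + structureConstants L coord w u a * structureConstants L coord a v e) = 0 := by
  have coord_lie_lie : ∀ x y z, ∑ a, structureConstants L coord x y a *
      structureConstants L coord a z e = coord e ⁅⁅L x, L y⁆, L z⁆ := by
    intro x y z
    rw [hL x y, sum_lie, map_sum]
    simp only [smul_lie, map_smul, smul_eq_mul, structureConstants]
  rw [sum_add_distrib, sum_add_distrib, coord_lie_lie, coord_lie_lie, coord_lie_lie, ← map_add,
    ← map_add, ← lie_skew, ← lie_skew ⁅L v, L w⁆, ← lie_skew ⁅L w, L u⁆, ← neg_add, ← neg_add,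
    lie_jacobi, neg_zero, map_zero]

end StructureConstants

section BaseChange

variable {R S : Type*} [CommRing R] [CommRing S] {n m : ℕ}

structure IsStructureConstants (f : Fin n → Fin n → Fin n → R) : Prop where
  swap_left : ∀ a b c, f a b c = -f b a c
  swap_right : ∀ a b c, f a b c = -f a c b
  jacobi : ∀ u v w e, ∑ a, (f u v a * f a w e + f v w a * f a u e + f w u a * f a v e) = 0

def IsRepresentation (f : Fin n → Fin n → Fin n → R) (ρ : Fin n → Matrix (Fin m) (Fin m) R) :
    Prop :=
  ∀ a b, ⁅ρ a, ρ b⁆ = ∑ c, f a b c • ρ c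

def levelOneUnscaled (f : Fin n → Fin n → Fin n → R) (ρ' ρ'' : Fin n → Matrix (Fin m) (Fin m) R)
    (a : Fin n) : Matrix (Fin m × Fin m) (Fin m × Fin m) R :=
  ∑ b, ∑ c, f a b c • (ρ' b ⊗ₖ ρ'' c)

def jacobiDefect {ι : Type*} [Fintype ι] [DecidableEq ι] (f : Fin n → Fin n → Fin n → R)
    (J : Fin n → Matrix ι ι R) (u v b : Fin n) : Matrix ι ι R :=
  (∑ a, f u v a • ⁅J a, J b⁆) + (∑ a, f v b a • ⁅J a, J u⁆) + (∑ a, f b u a • ⁅J a, J v⁆)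

theorem jacobiDefect_smul {ι : Type*} [Fintype ι] [DecidableEq ι] (f : Fin n → Fin n → Fin n → R)
    (J : Fin n → Matrix ι ι R) (r : R) (u v b : Fin n) :
    jacobiDefect f (fun a => r • J a) u v b = r ^ 2 • jacobiDefect f J u v b := by
  have lie_smul_smul : ∀ a c, ⁅r • J a, r • J c⁆ = r ^ 2 • ⁅J a, J c⁆ := by
    intro a c
    rw [Ring.lie_def, Ring.lie_def, smul_mul_smul_comm, smul_mul_smul_comm, ← smul_sub, sq]
  simp only [jacobiDefect, lie_smul_smul, smul_add, smul_sum, smul_comm (r ^ 2)]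

variable (φ : R →+* S)

theorem RingHom.mapMatrix_lie {ι : Type*} [Fintype ι] [DecidableEq ι] (A B : Matrix ι ι R) :
    φ.mapMatrix ⁅A, B⁆ = ⁅φ.mapMatrix A, φ.mapMatrix B⁆ := by
  simp only [Ring.lie_def, map_sub, map_mul]

theorem RingHom.mapMatrix_smul {ι : Type*} [Fintype ι] [DecidableEq ι] (r : R)
    (A : Matrix ι ι R) : φ.mapMatrix (r • A) = φ r • φ.mapMatrix A :=
  Matrix.map_smul' φ r A (map_mul φ)

theorem IsStructureConstants.map {f : Fin n → Fin n → Fin n → R} (hf : IsStructureConstants f) :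
    IsStructureConstants fun a b c => φ (f a b c) where
  swap_left a b c := by rw [hf.swap_left, map_neg]
  swap_right a b c := by rw [hf.swap_right, map_neg]
  jacobi u v w e := by simp only [← map_mul, ← map_add, ← map_sum, hf.jacobi, map_zero]

theorem IsRepresentation.map {f : Fin n → Fin n → Fin n → R}
    {ρ : Fin n → Matrix (Fin m) (Fin m) R} (hρ : IsRepresentation f ρ) :
    IsRepresentation (fun a b c => φ (f a b c)) fun a => φ.mapMatrix (ρ a) := by
  intro a b
  simp only [← φ.mapMatrix_lie, hρ a b, map_sum, φ.mapMatrix_smul]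

theorem levelOneUnscaled_map (f : Fin n → Fin n → Fin n → R)
    (ρ' ρ'' : Fin n → Matrix (Fin m) (Fin m) R) (a : Fin n) :
    levelOneUnscaled (fun a b c => φ (f a b c)) (fun a => φ.mapMatrix (ρ' a))
      (fun a => φ.mapMatrix (ρ'' a)) a = φ.mapMatrix (levelOneUnscaled f ρ' ρ'' a) := by
  simp only [levelOneUnscaled, map_sum, φ.mapMatrix_smul]
  congr! 3 with b _ c _
  ext i j
  simp only [RingHom.mapMatrix_apply, map_apply, kroneckerMap_apply, map_mul]

theorem jacobiDefect_map {ι : Type*} [Fintype ι] [DecidableEq ι] (f : Fin n → Fin n → Fin n → R)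
    (J : Fin n → Matrix ι ι R) (u v b : Fin n) :
    jacobiDefect (fun a b c => φ (f a b c)) (fun a => φ.mapMatrix (J a)) u v b
      = φ.mapMatrix (jacobiDefect f J u v b) := by
  simp only [jacobiDefect, map_add, map_sum, φ.mapMatrix_smul, φ.mapMatrix_lie]

end BaseChange

theorem levelOne_eq_smul_levelOneUnscaled {n m : ℕ} (hbar : ℂ) (f : Fin n → Fin n → Fin n → ℂ)
    (ρ' ρ'' : Fin n → Matrix (Fin m) (Fin m) ℂ) :
    levelOne hbar f ρ' ρ'' = fun a => (-(hbar / 2)) • levelOneUnscaled f ρ' ρ'' a :=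
  rfl

theorem jacobiDefect_levelOne_map {R : Type*} [CommRing R] (φ : R →+* ℂ) {n m : ℕ} (hbar : ℂ)
    (f : Fin n → Fin n → Fin n → R) (ρ' ρ'' : Fin n → Matrix (Fin m) (Fin m) R) (u v b : Fin n) :
    jacobiDefect (fun a b c => φ (f a b c))
        (levelOne hbar (fun a b c => φ (f a b c)) (fun a => φ.mapMatrix (ρ' a))
          fun a => φ.mapMatrix (ρ'' a)) u v b
      = (hbar / 2) ^ 2 • φ.mapMatrix (jacobiDefect f (levelOneUnscaled f ρ' ρ'') u v b) := by
  simp only [levelOne_eq_smul_levelOneUnscaled, levelOneUnscaled_map]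
  rw [jacobiDefect_smul, jacobiDefect_map, neg_sq]

section SO5

attribute [local instance] LieRing.ofAssociativeRing

def so5Index : Fin 10 → Fin 5 × Fin 5 :=
  ![(0, 1), (0, 2), (0, 3), (0, 4), (1, 2), (1, 3), (1, 4), (2, 3), (2, 4), (3, 4)]

def so5Basis (a : Fin 10) : Matrix (Fin 5) (Fin 5) ℤ :=
  single (so5Index a).1 (so5Index a).2 1 - single (so5Index a).2 (so5Index a).1 1

def so5StructureConstants : Fin 10 → Fin 10 → Fin 10 → ℤ :=
  structureConstants so5Basis fun c => entryLinearMap ℤ ℤ (so5Index c).1 (so5Index c).2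

theorem isRepresentation_so5Basis : IsRepresentation so5StructureConstants so5Basis := by
  unfold IsRepresentation
  decide +kernel

theorem isStructureConstants_so5StructureConstants :
    IsStructureConstants so5StructureConstants where
  swap_left := structureConstants_swap _ _
  swap_right := by decide +kernel
  jacobi := structureConstants_jacobi _ _ isRepresentation_so5Basis

theorem so5_jacobiDefect_apply :
    jacobiDefect so5StructureConstants
      (levelOneUnscaled so5StructureConstants so5Basis so5Basis) 0 1 2 (0, 1) (2, 3) = 1 := by
  decide +kernel

end SO5

/-- For `ħ ≠ 0` it is not true in general that, for a Lie algebra `g` with totally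
antisymmetric structure constants `f` satisfying the Jacobi identity and representations
`ρ', ρ''`, the operators `t_{a,1} = −(ħ/2)·∑ f_{abc} ρ'(t_b)⊗ρ''(t_c)` satisfy the
Jacobi-type identity of `g[z]`
`f_{uva}[t_{a,1},t_{b,1}] + f_{vba}[t_{a,1},t_{u,1}] + f_{bua}[t_{a,1},t_{v,1}] = 0`;
equivalently, the assignment `t_a z⁰ ↦ t_{a,0}`, `t_a z¹ ↦ t_{a,1}`, `t_a zⁿ ↦ 0 (n ≥ 2)`
does not in general define a Lie algebra representation of `g[z]`. -/
theorem level_one_fails_jacobi (hbar : ℂ) (hh : hbar ≠ 0) :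
    ¬ ∀ (n m : ℕ) (f : Fin n → Fin n → Fin n → ℂ)
        (ρ' ρ'' : Fin n → Matrix (Fin m) (Fin m) ℂ),
      (∀ a b c, f a b c = - f b a c) →
      (∀ a b c, f a b c = - f a c b) →
      (∀ u v w e : Fin n,
        (∑ a, (f u v a * f a w e + f v w a * f a u e + f w u a * f a v e)) = 0) →
      (∀ a b, ⁅ρ' a, ρ' b⁆ = ∑ c, f a b c • ρ' c) →
      (∀ a b, ⁅ρ'' a, ρ'' b⁆ = ∑ c, f a b c • ρ'' c) →
      ∀ u v b : Fin n,
        (∑ a, f u v a • ⁅levelOne hbar f ρ' ρ'' a, levelOne hbar f ρ' ρ'' b⁆)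
          + (∑ a, f v b a • ⁅levelOne hbar f ρ' ρ'' a, levelOne hbar f ρ' ρ'' u⁆)
          + (∑ a, f b u a • ⁅levelOne hbar f ρ' ρ'' a, levelOne hbar f ρ' ρ'' v⁆) = 0 := by
  intro H
  have hf := isStructureConstants_so5StructureConstants.map (Int.castRingHom ℂ)
  have hρ := isRepresentation_so5Basis.map (Int.castRingHom ℂ)
  have h := H 10 5 _ _ _ hf.swap_left hf.swap_right hf.jacobi hρ hρ 0 1 2
  -- naming `f` explicitly keeps elaboration from unfolding `so5StructureConstants`
  change jacobiDefect (fun a b c => Int.castRingHom ℂ (so5StructureConstants a b c))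
    (levelOne hbar _ _ _) 0 1 2 = 0 at h
  rw [jacobiDefect_levelOne_map] at h
  have h_entry := congrFun (congrFun h (0, 1)) (2, 3)
  rw [Matrix.smul_apply, RingHom.mapMatrix_apply, map_apply, so5_jacobiDefect_apply, map_one,
    smul_eq_mul, mul_one, Matrix.zero_apply] at h_entry
  exact pow_ne_zero 2 (div_ne_zero hh two_ne_zero) h_entry
end

section
/- Let V = ℂⁿ be the vector representation of sl_n, with quadratic Casimir eigenvalue on the k-th exterior power given by c(∧ᵏV) = k(n−k)/(n(n−1)). For k₁+k₂+k₃ = n, setting β_i = c(∧^{k_i}V) − c(∧^{k_j}V) − c(∧^{k_l}V) ({i,j,l}={1,2,3}), one has β₁ = −2k₂k₃/(n(n−1)) (and cyclic permutations), and consequently the vertex angles are θ₁₂ = π(k₁+k₂)/n, θ₂₃ = π(k₂+k₃)/n, θ₃₁ = π(k₁+k₃)/n. -/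
open Real

/-!
With `k₁ + k₂ + k₃ = n`, the numerators `kᵢ(n − kᵢ)` of the Casimir eigenvalues satisfy
`k₁(n − k₁) − k₂(n − k₂) − k₃(n − k₃) = −2k₂k₃`, so each `βᵢ` is `t = −2/(n(n − 1))` times the
product of the other two `kⱼ`. Then every pairwise product `βᵢβⱼ` is `t²k₁k₂k₃` times the
remaining `kₗ`, their sum is `t²k₁k₂k₃ · n`, and the vertex angle `π − πβᵢβⱼ/Σ` is
`π(1 − kₗ/n) = π(kᵢ + kⱼ)/n`.
-/

theorem casimir_sub_casimir_sub_casimir {K ι : Type*} [Field K] (c k : ι → K) (s D : K)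
    (hc : ∀ i, c i = k i * (s - k i) / D) {i j l : ι} (hs : k i + k j + k l = s) :
    c i - c j - c l = -(2 * k j * k l) / D := by
  subst hs
  simp only [hc]
  ring

theorem sub_mul_div_sum_pairwise_products {K : Type*} [Field K] {t a b d : K}
    (ht : t ≠ 0) (ha : a ≠ 0) (hb : b ≠ 0) (hd : d ≠ 0) (hs : a + b + d ≠ 0)
    (x β₁ β₂ β₃ : K) (h₁ : β₁ = t * (b * d)) (h₂ : β₂ = t * (d * a)) (h₃ : β₃ = t * (a * b)) :
    x - x * (β₁ * β₂) / (β₁ * β₂ + β₁ * β₃ + β₂ * β₃) = x * (a + b) / (a + b + d) ∧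
    x - x * (β₂ * β₃) / (β₁ * β₂ + β₁ * β₃ + β₂ * β₃) = x * (b + d) / (a + b + d) ∧
    x - x * (β₁ * β₃) / (β₁ * β₂ + β₁ * β₃ + β₂ * β₃) = x * (a + d) / (a + b + d) := by
  subst h₁ h₂ h₃
  have hsum : t * (b * d) * (t * (d * a)) + t * (b * d) * (t * (a * b)) +
      t * (d * a) * (t * (a * b)) = t ^ 2 * (a * b * d) * (a + b + d) := by ring
  have hm : t ^ 2 * (a * b * d) ≠ 0 := by positivity
  rw [hsum]
  refine ⟨?_, ?_, ?_⟩ <;> field_simp <;> ring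

theorem sl_n_fundamental_vertex_angles_general (n k₁ k₂ k₃ : ℕ)
    (hk₁ : 1 ≤ k₁) (hk₂ : 1 ≤ k₂) (hk₃ : 1 ≤ k₃) (hsum : k₁ + k₂ + k₃ = n)
    (c : ℕ → ℝ)
    (hc : ∀ k : ℕ, c k = ((k : ℝ) * ((n : ℝ) - (k : ℝ))) / ((n : ℝ) * ((n : ℝ) - 1)))
    (β₁ β₂ β₃ : ℝ)
    (hβ₁ : β₁ = c k₁ - c k₂ - c k₃) (hβ₂ : β₂ = c k₂ - c k₃ - c k₁)
    (hβ₃ : β₃ = c k₃ - c k₁ - c k₂) :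
    (β₁ = -(2 * (k₂ : ℝ) * (k₃ : ℝ)) / ((n : ℝ) * ((n : ℝ) - 1)) ∧
     β₂ = -(2 * (k₃ : ℝ) * (k₁ : ℝ)) / ((n : ℝ) * ((n : ℝ) - 1)) ∧
     β₃ = -(2 * (k₁ : ℝ) * (k₂ : ℝ)) / ((n : ℝ) * ((n : ℝ) - 1))) ∧
    (π - π * (β₁ * β₂) / (β₁ * β₂ + β₁ * β₃ + β₂ * β₃) = π * ((k₁ : ℝ) + (k₂ : ℝ)) / n ∧
     π - π * (β₂ * β₃) / (β₁ * β₂ + β₁ * β₃ + β₂ * β₃) = π * ((k₂ : ℝ) + (k₃ : ℝ)) / n ∧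
     π - π * (β₁ * β₃) / (β₁ * β₂ + β₁ * β₃ + β₂ * β₃) = π * ((k₁ : ℝ) + (k₃ : ℝ)) / n) := by
  have hn : (n : ℝ) = k₁ + k₂ + k₃ := by exact_mod_cast hsum.symm
  have hβ {i j l : ℕ} (hs : (i : ℝ) + j + l = n) :=
    casimir_sub_casimir_sub_casimir c (fun k : ℕ => (k : ℝ)) n (n * (n - 1)) hc hs
  have h₁ : β₁ = -(2 * (k₂ : ℝ) * k₃) / (n * (n - 1)) := hβ₁ ▸ hβ hn.symm
  have h₂ : β₂ = -(2 * (k₃ : ℝ) * k₁) / (n * (n - 1)) := hβ₂ ▸ hβ (by rw [hn]; ring)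
  have h₃ : β₃ = -(2 * (k₁ : ℝ) * k₂) / (n * (n - 1)) := hβ₃ ▸ hβ (by rw [hn]; ring)
  have hD : (n : ℝ) * (n - 1) ≠ 0 := by
    have : (3 : ℝ) ≤ n := by exact_mod_cast (show 3 ≤ n by omega)
    exact mul_ne_zero (by linarith) (by linarith)
  have hk : ∀ k : ℕ, 1 ≤ k → (k : ℝ) ≠ 0 := fun k hk => Nat.cast_ne_zero.mpr (by omega)
  refine ⟨⟨h₁, h₂, h₃⟩, ?_⟩
  rw [hn]
  exact sub_mul_div_sum_pairwise_products (t := -2 / ((n : ℝ) * (n - 1)))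
    (div_ne_zero (by norm_num) hD) (hk k₁ hk₁) (hk k₂ hk₂) (hk k₃ hk₃) (hn ▸ hk n (by omega))
    π β₁ β₂ β₃ (by rw [h₁]; ring) (by rw [h₂]; ring) (by rw [h₃]; ring)

/-- For the fundamental representations `∧^k V` of `sl_n` with Casimir eigenvalues
`c(∧^k V) = k(n−k)/(n(n−1))` and `k₁+k₂+k₃ = n`, one has
`β₁ = −2k₂k₃/(n(n−1))` (and cyclic permutations), and consequently the trivalent
vertex angles are `θ₁₂ = π(k₁+k₂)/n`, `θ₂₃ = π(k₂+k₃)/n`, `θ₃₁ = π(k₁+k₃)/n`. -/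
theorem sl_n_fundamental_vertex_angles (n k₁ k₂ k₃ : ℕ) (hn : 2 ≤ n)
    (hk₁ : 1 ≤ k₁) (hk₂ : 1 ≤ k₂) (hk₃ : 1 ≤ k₃) (hsum : k₁ + k₂ + k₃ = n)
    (c : ℕ → ℝ)
    (hc : ∀ k : ℕ, c k = ((k : ℝ) * ((n : ℝ) - (k : ℝ))) / ((n : ℝ) * ((n : ℝ) - 1)))
    (β₁ β₂ β₃ : ℝ)
    (hβ₁ : β₁ = c k₁ - c k₂ - c k₃) (hβ₂ : β₂ = c k₂ - c k₃ - c k₁)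
    (hβ₃ : β₃ = c k₃ - c k₁ - c k₂) :
    (β₁ = -(2 * (k₂ : ℝ) * (k₃ : ℝ)) / ((n : ℝ) * ((n : ℝ) - 1)) ∧
     β₂ = -(2 * (k₃ : ℝ) * (k₁ : ℝ)) / ((n : ℝ) * ((n : ℝ) - 1)) ∧
     β₃ = -(2 * (k₁ : ℝ) * (k₂ : ℝ)) / ((n : ℝ) * ((n : ℝ) - 1))) ∧
    (π - π * (β₁ * β₂) / (β₁ * β₂ + β₁ * β₃ + β₂ * β₃) = π * ((k₁ : ℝ) + (k₂ : ℝ)) / n ∧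
     π - π * (β₂ * β₃) / (β₁ * β₂ + β₁ * β₃ + β₂ * β₃) = π * ((k₂ : ℝ) + (k₃ : ℝ)) / n ∧
     π - π * (β₁ * β₃) / (β₁ * β₂ + β₁ * β₃ + β₂ * β₃) = π * ((k₁ : ℝ) + (k₃ : ℝ)) / n) :=
  sl_n_fundamental_vertex_angles_general n k₁ k₂ k₃ hk₁ hk₂ hk₃ hsum c hc β₁ β₂ β₃ hβ₁ hβ₂ hβ₃
end

section
/- The double integral ∫₀¹ dp ∫_ℝ dx 1/((|x| + |x−p|)(|x| + |x−1|)(|x−p| + |x−1|)) equals π²/3. In particular, the region p < x < 1 contributes ∫_{0<p<x<1} dp dx / ((2x−p)(1−p)) = π²/8, the region x > 1 contributes ∫_{0<p<1<x} dp dx / ((2x−p)(2x−1)(2x−1−p)) = π²/24, and the contributions of the regions x < 0 and 0 < x < p are obtained by the symmetry x ↦ 1−x, p ↦ 1−p. -/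
open MeasureTheory Real Set Filter Topology

noncomputable section

lemma hzeta : HasSum (fun n : ℕ => (1:ℝ)/((n:ℝ)+1)^2) (π^2/6) := by
  have h := hasSum_zeta_two
  have h2 : HasSum (fun n : ℕ => (1:ℝ)/((n:ℝ)+1)^2) (π^2/6 - ∑ i ∈ Finset.range 1, (1:ℝ)/(i:ℝ)^2) := by
    have := (hasSum_nat_add_iff' (f := fun n : ℕ => (1:ℝ)/(n:ℝ)^2) 1).2 h
    convert this using 2 with n
    · rfl
    push_cast; ring_nf
  simpa using h2

lemma hodd : HasSum (fun n : ℕ => if Odd n then (1:ℝ)/((n:ℝ)+1)^2 else 0) (π^2/24) := by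
  have hinj : Function.Injective (fun k : ℕ => 2*k+1) := fun a b h => by simpa using h
  rw [← Function.Injective.hasSum_iff hinj]
  · have := hzeta.div_const 4
    have heq : π^2/24 = π^2/6/4 := by ring
    rw [heq]
    convert this using 1
    · rfl
    funext k
    have hok : Odd (2*k+1) := ⟨k, by ring⟩
    simp only [Function.comp_apply, if_pos hok]
    push_cast
    rw [div_div]
    congr 1
    ring
  · intro n hn
    have : ¬ Odd n := by
      rintro ⟨k, rfl⟩
      exact hn ⟨k, rfl⟩
    rw [if_neg this]

lemma heta : HasSum (fun n : ℕ => (-1:ℝ)^n/((n:ℝ)+1)^2) (π^2/12) := by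
  have h := hzeta.sub (hodd.mul_left 2)
  have : π^2/6 - 2*(π^2/24) = π^2/12 := by ring
  rw [this] at h
  convert h using 2 with n
  · rfl
  rcases Nat.even_or_odd n with he | ho
  · rw [if_neg (by simpa using he), he.neg_one_pow]
    ring
  · rw [if_pos ho, ho.neg_one_pow]
    ring

lemma seriesInt (f : ℝ → ℝ) (c : ℕ → ℝ) (hc : ∀ n, 0 ≤ c n)
    (hmeas : Measurable f)
    (hf : ∀ t ∈ Ioo (0:ℝ) 1, HasSum (fun n => c n * t ^ n) (f t))
    (S : ℝ) (hS : HasSum (fun n => c n / ((n:ℝ)+1)) S) :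
    IntegrableOn f (Ioo 0 1) ∧ ∫ t in Ioo (0:ℝ) 1, f t = S := by
  have hS0 : 0 ≤ S := hS.nonneg (fun n => div_nonneg (hc n) n.cast_add_one_pos.le)
  have hf0 : ∀ᵐ t ∂(volume.restrict (Ioo (0:ℝ) 1)), 0 ≤ f t := by
    filter_upwards [ae_restrict_mem measurableSet_Ioo] with t ht
    exact (hf t ht).nonneg (fun n => mul_nonneg (hc n) (pow_nonneg ht.1.le n))
  -- each power integral
  have hterm : ∀ n : ℕ, ∫⁻ t in Ioo (0:ℝ) 1, ENNReal.ofReal (c n * t ^ n)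
      = ENNReal.ofReal (c n / ((n:ℝ)+1)) := by
    intro n
    have hint : IntegrableOn (fun t : ℝ => c n * t ^ n) (Ioo 0 1) :=
      ((continuous_const.mul (continuous_pow n)).integrableOn_Icc).mono_set Ioo_subset_Icc_self
    have hnn : 0 ≤ᵐ[volume.restrict (Ioo (0:ℝ) 1)] fun t : ℝ => c n * t ^ n := by
      filter_upwards [ae_restrict_mem measurableSet_Ioo] with t ht
      exact mul_nonneg (hc n) (pow_nonneg ht.1.le n)
    rw [← ofReal_integral_eq_lintegral_ofReal hint hnn]
    congr 1
    rw [← integral_Ioc_eq_integral_Ioo, ← intervalIntegral.integral_of_le zero_le_one,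
      intervalIntegral.integral_const_mul, integral_pow]
    simp [div_eq_mul_inv]
  have key : ∫⁻ t in Ioo (0:ℝ) 1, ENNReal.ofReal (f t) = ENNReal.ofReal S := by
    have h1 : ∫⁻ t in Ioo (0:ℝ) 1, ENNReal.ofReal (f t)
        = ∫⁻ t in Ioo (0:ℝ) 1, ∑' n, ENNReal.ofReal (c n * t ^ n) := by
      apply lintegral_congr_ae
      filter_upwards [ae_restrict_mem measurableSet_Ioo] with t ht
      rw [← (hf t ht).tsum_eq,
        ENNReal.ofReal_tsum_of_nonneg (fun n => mul_nonneg (hc n) (pow_nonneg ht.1.le n))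
          (hf t ht).summable]
    have hm : ∀ n : ℕ, AEMeasurable (fun t : ℝ => ENNReal.ofReal (c n * t ^ n))
        (volume.restrict (Ioo (0:ℝ) 1)) :=
      fun n => ((measurable_const.mul (measurable_id.pow_const n)).ennreal_ofReal).aemeasurable
    rw [h1, lintegral_tsum hm]
    calc ∑' n, ∫⁻ t in Ioo (0:ℝ) 1, ENNReal.ofReal (c n * t ^ n)
        = ∑' n, ENNReal.ofReal (c n / ((n:ℝ)+1)) := tsum_congr hterm
      _ = ENNReal.ofReal S := by
          rw [← ENNReal.ofReal_tsum_of_nonneg (fun n => div_nonneg (hc n) n.cast_add_one_pos.le)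
            hS.summable, hS.tsum_eq]
  have hInt : IntegrableOn f (Ioo 0 1) := by
    refine ⟨hmeas.aestronglyMeasurable, ?_⟩
    rw [hasFiniteIntegral_iff_ofReal hf0, key]
    exact ENNReal.ofReal_lt_top
  refine ⟨hInt, ?_⟩
  rw [integral_eq_lintegral_of_nonneg_ae hf0 hmeas.aestronglyMeasurable, key,
    ENNReal.toReal_ofReal hS0]

lemma baseI1 : IntegrableOn (fun t : ℝ => -Real.log (1-t)/t) (Ioo 0 1) ∧
    ∫ t in Ioo (0:ℝ) 1, -Real.log (1-t)/t = π^2/6 := by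
  apply seriesInt _ (fun n : ℕ => 1/((n:ℝ)+1)) (fun n => by positivity)
  · exact ((Real.measurable_log.comp (measurable_const.sub measurable_id)).neg).div measurable_id
  · intro t ht
    have h := (Real.hasSum_pow_div_log_of_abs_lt_one
      (x := t) (by rw [abs_of_pos ht.1]; exact ht.2)).div_const t
    convert h using 2 with n
    · rfl
    have ht0 : t ≠ 0 := ne_of_gt ht.1
    rw [pow_succ]
    field_simp
  · convert hzeta using 2 with n
    rw [div_div, pow_two]

lemma baseI2 : IntegrableOn (fun t : ℝ => (Real.log (1+t) - Real.log (1-t))/t) (Ioo 0 1) ∧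
    ∫ t in Ioo (0:ℝ) 1, (Real.log (1+t) - Real.log (1-t))/t = π^2/4 := by
  apply seriesInt _ (fun n : ℕ => (1+(-1:ℝ)^n)/((n:ℝ)+1))
  · intro n
    apply div_nonneg _ n.cast_add_one_pos.le
    rcases Nat.even_or_odd n with h | h
    · rw [h.neg_one_pow]; norm_num
    · rw [h.neg_one_pow]; norm_num
  · exact ((Real.measurable_log.comp (measurable_const.add measurable_id)).sub
      (Real.measurable_log.comp (measurable_const.sub measurable_id))).div measurable_id
  · intro t ht
    have habs : |t| < 1 := by rw [abs_of_pos ht.1]; exact ht.2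
    have h1 := Real.hasSum_pow_div_log_of_abs_lt_one (x := t) habs
    have h2 := Real.hasSum_pow_div_log_of_abs_lt_one (x := -t) (by rwa [abs_neg])
    rw [sub_neg_eq_add] at h2
    have h := (h1.sub h2).div_const t
    have hval : (-Real.log (1-t) - -Real.log (1+t))/t = (Real.log (1+t) - Real.log (1-t))/t := by
      ring_nf
    rw [hval] at h
    convert h using 2 with n
    · rfl
    have ht0 : t ≠ 0 := ne_of_gt ht.1
    have hneg : (-t)^(n+1) = -((-1:ℝ)^n * t^(n+1)) := by rw [neg_pow, pow_succ]; ring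
    rw [hneg, pow_succ t n]
    field_simp
    ring
  · have h := hzeta.add heta
    have : π^2/6 + π^2/12 = π^2/4 := by ring
    rw [this] at h
    convert h using 2 with n
    rw [← add_div, div_div, pow_two]

lemma baseI3 : IntegrableOn (fun t : ℝ => Real.log (1+t)/t) (Ioo 0 1) ∧
    ∫ t in Ioo (0:ℝ) 1, Real.log (1+t)/t = π^2/12 := by
  have hfun : (fun t : ℝ => Real.log (1+t)/t)
      = fun t => (Real.log (1+t) - Real.log (1-t))/t - -Real.log (1-t)/t := by
    funext t
    rw [sub_div, neg_div]
    ring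
  constructor
  · rw [hfun]; exact baseI2.1.sub baseI1.1
  · rw [hfun, integral_sub baseI2.1 baseI1.1, baseI2.2, baseI1.2]
    ring

lemma mpE : MeasurePreserving (fun t : ℝ => 1 - t) volume volume :=
  Measure.measurePreserving_sub_left volume 1

lemma embE : MeasurableEmbedding (fun t : ℝ => 1 - t) :=
  (MeasurableEquiv.subLeft (1:ℝ)).measurableEmbedding

lemma preE : (fun t : ℝ => 1 - t) ⁻¹' (Ioo 0 1) = Ioo 0 1 := by
  ext t
  simp only [mem_preimage, mem_Ioo]
  constructor <;> rintro ⟨h1, h2⟩ <;> constructor <;> linarith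

lemma subst_val (ψ : ℝ → ℝ) :
    ∫ p in Ioo (0:ℝ) 1, ψ p = ∫ t in Ioo (0:ℝ) 1, ψ (1-t) := by
  have h := mpE.setIntegral_preimage_emb embE ψ (Ioo 0 1)
  rw [preE] at h
  exact h.symm

lemma subst_intgr (ψ : ℝ → ℝ) (h : IntegrableOn (fun t => ψ (1-t)) (Ioo 0 1)) :
    IntegrableOn ψ (Ioo 0 1) := by
  have h2 := (mpE.integrableOn_comp_preimage embE (f := ψ) (s := Ioo 0 1))
  rw [preE] at h2
  exact h2.1 h

def SB : Set (ℝ × ℝ) := {q | 0 < q.1 ∧ q.1 < q.2 ∧ q.2 < 1}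
def gB : ℝ × ℝ → ℝ := fun q => 1/((2*q.2 - q.1)*(1 - q.1))
def ψB (p : ℝ) : ℝ := (Real.log (2-p) - Real.log p)/(2*(1-p))

lemma measSB : MeasurableSet SB := by
  have h1 : MeasurableSet {q : ℝ×ℝ | 0 < q.1} := measurableSet_lt measurable_const measurable_fst
  have h2 : MeasurableSet {q : ℝ×ℝ | q.1 < q.2} := measurableSet_lt measurable_fst measurable_snd
  have h3 : MeasurableSet {q : ℝ×ℝ | q.2 < 1} := measurableSet_lt measurable_snd measurable_const
  exact (h1.inter (h2.inter h3) : _)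

lemma measgB : Measurable gB :=
  measurable_const.div (((measurable_const.mul measurable_snd).sub measurable_fst).mul
    (measurable_const.sub measurable_fst))

lemma nngB : ∀ q : ℝ × ℝ, 0 ≤ SB.indicator gB q := by
  apply indicator_nonneg
  rintro ⟨p, x⟩ ⟨h1, h2, h3⟩
  have : (0:ℝ) < 2*x - p := by dsimp at *; linarith
  have : (0:ℝ) < 1 - p := by dsimp at *; linarith
  apply div_nonneg zero_le_one
  positivity

lemma ψB_comp : (fun t : ℝ => ψB (1-t)) = fun t => ((Real.log (1+t) - Real.log (1-t))/t)/2 := by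
  funext t
  simp only [ψB]
  rw [show (2:ℝ)-(1-t) = 1+t by ring, show 2*((1:ℝ)-(1-t)) = t*2 by ring, div_div]

lemma ψB_intgr : IntegrableOn ψB (Ioo 0 1) :=
  subst_intgr _ (by rw [ψB_comp]; exact baseI2.1.div_const 2)

lemma ψB_val : ∫ p in Ioo (0:ℝ) 1, ψB p = π^2/8 := by
  rw [subst_val, ψB_comp, integral_div, baseI2.2]
  ring

lemma innerB (p : ℝ) (hp : p ∈ Ioo (0:ℝ) 1) :
    ∫ x in Ioo p 1, 1/((2*x-p)*(1-p)) = ψB p := by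
  obtain ⟨hp0, hp1⟩ := hp
  have hle : p ≤ 1 := hp1.le
  have hderiv : ∀ x ∈ uIcc p 1,
      HasDerivAt (fun x => Real.log (2*x-p)/(2*(1-p))) (1/((2*x-p)*(1-p))) x := by
    intro x hx
    rw [uIcc_of_le hle] at hx
    have hpos : 0 < 2*x - p := by have := hx.1; linarith
    have h1 : HasDerivAt (fun x : ℝ => 2*x - p) 2 x := by
      simpa using ((hasDerivAt_id x).const_mul 2).sub_const p
    have h2 : HasDerivAt (fun x => Real.log (2*x-p)) (2/(2*x-p)) x := by
      have := (Real.hasDerivAt_log hpos.ne').comp x h1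
      simpa [div_eq_inv_mul, Function.comp_def] using this
    have h3 := h2.div_const (2*(1-p))
    convert h3 using 1
    · rfl
    · rfl
    have hne2 : (1:ℝ) - p ≠ 0 := by linarith
    field_simp
  have hcont : IntervalIntegrable (fun x => 1/((2*x-p)*(1-p))) volume p 1 := by
    apply ContinuousOn.intervalIntegrable
    apply ContinuousOn.div continuousOn_const
    · fun_prop
    · intro x hx
      rw [uIcc_of_le hle] at hx
      have h4 : 0 < 2*x - p := by have := hx.1; linarith
      exact (mul_pos h4 (by linarith)).ne'
  rw [← MeasureTheory.integral_Ioc_eq_integral_Ioo, ← intervalIntegral.integral_of_le hle,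
    intervalIntegral.integral_eq_sub_of_hasDerivAt hderiv hcont]
  simp only [ψB]
  rw [show (2:ℝ)*1 - p = 2 - p by ring, show 2*p - p = p by ring, div_sub_div_same]

lemma sectionB (p : ℝ) : (fun x => SB.indicator gB (p, x))
    = if 0 < p then (Ioo p 1).indicator (fun x => 1/((2*x-p)*(1-p))) else 0 := by
  funext x
  by_cases hp : 0 < p
  · rw [if_pos hp]
    by_cases hx : x ∈ Ioo p 1
    · rw [indicator_of_mem hx, indicator_of_mem (show (p,x) ∈ SB from ⟨hp, hx.1, hx.2⟩)]
      rfl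
    · rw [indicator_of_notMem hx, indicator_of_notMem]
      rintro ⟨_, h2, h3⟩
      exact hx ⟨h2, h3⟩
  · rw [if_neg hp, indicator_of_notMem]
    · rfl
    rintro ⟨h1, _, _⟩
    exact hp h1

lemma hSecIntB : ∀ p : ℝ, Integrable (fun x => SB.indicator gB (p, x)) volume := by
  intro p
  rw [sectionB]
  by_cases hp : 0 < p
  · rw [if_pos hp, integrable_indicator_iff measurableSet_Ioo]
    by_cases hp1 : p < 1
    · apply (ContinuousOn.integrableOn_Icc ?_).mono_set Ioo_subset_Icc_self
      apply ContinuousOn.div continuousOn_const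
      · fun_prop
      · intro x hx
        have h4 : 0 < 2*x - p := by have := hx.1; linarith
        exact (mul_pos h4 (by linarith)).ne'
    · rw [Ioo_eq_empty hp1]
      exact integrableOn_empty
  · rw [if_neg hp]
    exact integrable_zero _ _ _

lemma hOuterEqB : (fun p => ∫ x, SB.indicator gB (p, x)) = (Ioo (0:ℝ) 1).indicator ψB := by
  funext p
  rw [sectionB]
  by_cases hp : p ∈ Ioo (0:ℝ) 1
  · rw [if_pos hp.1, indicator_of_mem hp, ← innerB p hp, integral_indicator measurableSet_Ioo]
  · rw [indicator_of_notMem hp]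
    by_cases hp0 : 0 < p
    · have hp1 : ¬ p < 1 := fun h => hp ⟨hp0, h⟩
      rw [if_pos hp0, Ioo_eq_empty hp1, indicator_empty]
      simp
    · rw [if_neg hp0]
      simp

lemma intB : Integrable (SB.indicator gB) ((volume : Measure ℝ).prod volume) := by
  have hmeasφ : AEStronglyMeasurable (SB.indicator gB) ((volume : Measure ℝ).prod volume) :=
    (measgB.indicator measSB).aestronglyMeasurable
  rw [integrable_prod_iff hmeasφ]
  refine ⟨Filter.Eventually.of_forall (hSecIntB), ?_⟩
  have heq : (fun p => ∫ x, ‖SB.indicator gB (p, x)‖) = (Ioo (0:ℝ) 1).indicator ψB := by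
    rw [← hOuterEqB]
    funext p
    exact integral_congr_ae (Filter.Eventually.of_forall fun x => norm_of_nonneg (nngB (p, x)))
  rw [heq, integrable_indicator_iff measurableSet_Ioo]
  exact ψB_intgr

lemma intgrSB : IntegrableOn gB SB volume :=
  (integrable_indicator_iff measSB).1 intB

theorem partB : (∫ q in SB, gB q) = π^2/8 := by
  rw [← integral_indicator measSB, MeasureTheory.Measure.volume_eq_prod]
  rw [integral_prod _ intB,
    integral_congr_ae (Filter.Eventually.of_forall fun p => congrFun hOuterEqB p),
    integral_indicator measurableSet_Ioo]
  exact ψB_val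

def SC : Set (ℝ × ℝ) := {q | 0 < q.1 ∧ q.1 < 1 ∧ 1 < q.2}
def gC : ℝ × ℝ → ℝ := fun q => 1/((2*q.2 - q.1)*(2*q.2 - 1)*(2*q.2 - 1 - q.1))
def σC (p : ℝ) : ℝ := -Real.log (1-p)/(2*p)
def ρC (p : ℝ) : ℝ := Real.log (2-p)/(2*(1-p))
def ψC (p : ℝ) : ℝ := σC p - ρC p

lemma measSC : MeasurableSet SC := by
  have h1 : MeasurableSet {q : ℝ×ℝ | 0 < q.1} := measurableSet_lt measurable_const measurable_fst
  have h2 : MeasurableSet {q : ℝ×ℝ | q.1 < 1} := measurableSet_lt measurable_fst measurable_const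
  have h3 : MeasurableSet {q : ℝ×ℝ | 1 < q.2} := measurableSet_lt measurable_const measurable_snd
  exact (h1.inter (h2.inter h3) : _)

lemma measgC : Measurable gC :=
  measurable_const.div ((((measurable_const.mul measurable_snd).sub measurable_fst).mul
    ((measurable_const.mul measurable_snd).sub measurable_const)).mul
    (((measurable_const.mul measurable_snd).sub measurable_const).sub measurable_fst))

lemma nngC : ∀ q : ℝ × ℝ, 0 ≤ SC.indicator gC q := by
  apply indicator_nonneg
  rintro ⟨p, x⟩ ⟨h1, h2, h3⟩
  dsimp only at h1 h2 h3 ⊢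
  have e1 : (0:ℝ) < 2*x - p := by linarith
  have e2 : (0:ℝ) < 2*x - 1 := by linarith
  have e3 : (0:ℝ) < 2*x - 1 - p := by linarith
  unfold gC
  positivity

-- limit of log differences
lemma logdiff_tendsto (a b : ℝ) :
    Tendsto (fun x => Real.log (2*x - a) - Real.log (2*x - b)) atTop (𝓝 0) := by
  have hb : Tendsto (fun x : ℝ => 2*x - b) atTop atTop := by
    apply tendsto_atTop_add_const_right
    exact tendsto_id.const_mul_atTop two_pos
  have h2 : Tendsto (fun x : ℝ => (b - a)/(2*x - b)) atTop (𝓝 0) :=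
    Tendsto.div_atTop tendsto_const_nhds hb
  have h3 : Tendsto (fun x : ℝ => 1 + (b - a)/(2*x - b)) atTop (𝓝 1) := by
    simpa using tendsto_const_nhds.add h2
  have h4 : Tendsto (fun x : ℝ => Real.log (1 + (b - a)/(2*x - b))) atTop (𝓝 0) := by
    have := (Real.continuousAt_log one_ne_zero).tendsto.comp h3
    simpa [Function.comp_def] using this
  apply h4.congr'
  filter_upwards [eventually_ge_atTop (|a| + |b| + 1)] with x hx
  have ha := le_abs_self a
  have hb := le_abs_self b
  have ha0 := abs_nonneg a
  have hb0 := abs_nonneg b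
  have hxa : 0 < 2*x - a := by linarith
  have hxb : 0 < 2*x - b := by linarith
  rw [show 1 + (b - a)/(2*x - b) = (2*x - a)/(2*x - b) by field_simp; ring,
    Real.log_div hxa.ne' hxb.ne']

lemma innerC (p : ℝ) (hp : p ∈ Ioo (0:ℝ) 1) :
    IntegrableOn (fun x => 1/((2*x - p)*(2*x - 1)*(2*x - 1 - p))) (Ioi 1) ∧
    ∫ x in Ioi (1:ℝ), 1/((2*x - p)*(2*x - 1)*(2*x - 1 - p)) = ψC p := by
  obtain ⟨hp0, hp1⟩ := hp
  set H : ℝ → ℝ := fun x =>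
    (Real.log (2*x - (1+p)) - Real.log (2*x - 1))/(2*p)
    + (Real.log (2*x - p) - Real.log (2*x - 1))/(2*(1-p)) with hH
  have hlog : ∀ (a x : ℝ), 0 < 2*x - a →
      HasDerivAt (fun x => Real.log (2*x - a)) (2/(2*x - a)) x := by
    intro a x ha
    have h1 : HasDerivAt (fun x : ℝ => 2*x - a) 2 x := by
      simpa using ((hasDerivAt_id x).const_mul 2).sub_const a
    simpa [div_eq_inv_mul, Function.comp_def] using (Real.hasDerivAt_log ha.ne').comp x h1
  have hderiv : ∀ x ∈ Ici (1:ℝ),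
      HasDerivAt H (1/((2*x - p)*(2*x - 1)*(2*x - 1 - p))) x := by
    intro x hx
    have hx1 : (1:ℝ) ≤ x := hx
    have e1 : 0 < 2*x - (1+p) := by linarith
    have e2 : 0 < 2*x - 1 := by linarith
    have e3 : 0 < 2*x - p := by linarith
    have h := (((hlog (1+p) x e1).sub (hlog 1 x e2)).div_const (2*p)).add
      (((hlog p x e3).sub (hlog 1 x e2)).div_const (2*(1-p)))
    convert h using 1
    · rfl
    · rfl
    · rfl
    have n0 : p ≠ 0 := hp0.ne'
    have hne : (1:ℝ) - p ≠ 0 := by intro h; rw [sub_eq_zero] at h; exact hp1.ne h.symm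
    have n1 := e1.ne'
    have n2 := e2.ne'
    have n3 := e3.ne'
    have n4 : 2*x - 1 - p ≠ 0 := by intro h; apply n1; linarith
    field_simp
    ring
  have hpos : ∀ x ∈ Ioi (1:ℝ), 0 ≤ 1/((2*x - p)*(2*x - 1)*(2*x - 1 - p)) := by
    intro x hx
    have hx1 : (1:ℝ) < x := hx
    have e1 : (0:ℝ) < 2*x - p := by linarith
    have e2 : (0:ℝ) < 2*x - 1 := by linarith
    have e3 : (0:ℝ) < 2*x - 1 - p := by linarith
    positivity
  have htend : Tendsto H atTop (𝓝 0) := by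
    have := ((logdiff_tendsto (1+p) 1).div_const (2*p)).add
      ((logdiff_tendsto p 1).div_const (2*(1-p)))
    simpa using this
  have hH1 : H 1 = Real.log (1-p)/(2*p) + Real.log (2-p)/(2*(1-p)) := by
    simp only [hH]
    rw [show 2*(1:ℝ) - (1+p) = 1 - p by ring, show 2*(1:ℝ) - 1 = 1 by ring,
      show 2*(1:ℝ) - p = 2 - p by ring, Real.log_one]
    ring
  constructor
  · exact integrableOn_Ioi_deriv_of_nonneg' hderiv hpos htend
  · rw [integral_Ioi_of_hasDerivAt_of_nonneg' hderiv hpos htend, hH1]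
    unfold ψC σC ρC
    ring

lemma ρC_comp : (fun t : ℝ => ρC (1-t)) = fun t => (Real.log (1+t)/t)/2 := by
  funext t
  simp only [ρC]
  rw [show (2:ℝ)-(1-t) = 1+t by ring, show 2*((1:ℝ)-(1-t)) = t*2 by ring, div_div]

lemma σC_eq : σC = fun p => (-Real.log (1-p)/p)/2 := by
  funext p
  simp only [σC]
  rw [div_div, mul_comm]

lemma σC_intgr : IntegrableOn σC (Ioo 0 1) := by
  rw [σC_eq]
  exact baseI1.1.div_const 2

lemma ρC_intgr : IntegrableOn ρC (Ioo 0 1) :=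
  subst_intgr _ (by rw [ρC_comp]; exact baseI3.1.div_const 2)

lemma ψC_intgr : IntegrableOn ψC (Ioo 0 1) := by
  unfold ψC
  exact σC_intgr.sub ρC_intgr

lemma ψC_val : ∫ p in Ioo (0:ℝ) 1, ψC p = π^2/24 := by
  unfold ψC
  rw [integral_sub σC_intgr ρC_intgr]
  have h1 : ∫ p in Ioo (0:ℝ) 1, σC p = π^2/12 := by
    rw [σC_eq, integral_div, baseI1.2]
    ring
  have h2 : ∫ p in Ioo (0:ℝ) 1, ρC p = π^2/24 := by
    rw [subst_val, ρC_comp, integral_div, baseI3.2]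
    ring
  rw [h1, h2]
  ring

lemma sectionC (p : ℝ) : (fun x => SC.indicator gC (p, x))
    = if 0 < p ∧ p < 1 then (Ioi 1).indicator
        (fun x => 1/((2*x - p)*(2*x - 1)*(2*x - 1 - p))) else 0 := by
  funext x
  by_cases hp : 0 < p ∧ p < 1
  · rw [if_pos hp]
    by_cases hx : x ∈ Ioi (1:ℝ)
    · rw [indicator_of_mem hx, indicator_of_mem (show (p,x) ∈ SC from ⟨hp.1, hp.2, hx⟩)]
      rfl
    · rw [indicator_of_notMem hx, indicator_of_notMem]
      rintro ⟨_, _, h3⟩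
      exact hx h3
  · rw [if_neg hp, indicator_of_notMem]
    · rfl
    rintro ⟨h1, h2, _⟩
    exact hp ⟨h1, h2⟩

lemma hSecIntC : ∀ p : ℝ, Integrable (fun x => SC.indicator gC (p, x)) volume := by
  intro p
  rw [sectionC]
  by_cases hp : 0 < p ∧ p < 1
  · rw [if_pos hp, integrable_indicator_iff measurableSet_Ioi]
    exact (innerC p ⟨hp.1, hp.2⟩).1
  · rw [if_neg hp]
    exact integrable_zero _ _ _

lemma hOuterEqC : (fun p => ∫ x, SC.indicator gC (p, x)) = (Ioo (0:ℝ) 1).indicator ψC := by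
  funext p
  rw [sectionC]
  by_cases hp : p ∈ Ioo (0:ℝ) 1
  · rw [if_pos ⟨hp.1, hp.2⟩, indicator_of_mem hp, ← (innerC p hp).2,
      integral_indicator measurableSet_Ioi]
  · rw [indicator_of_notMem hp, if_neg (fun h => hp ⟨h.1, h.2⟩)]
    simp

lemma intC : Integrable (SC.indicator gC) ((volume : Measure ℝ).prod volume) := by
  have hmeasφ : AEStronglyMeasurable (SC.indicator gC) ((volume : Measure ℝ).prod volume) :=
    (measgC.indicator measSC).aestronglyMeasurable
  rw [integrable_prod_iff hmeasφ]
  refine ⟨Filter.Eventually.of_forall (hSecIntC), ?_⟩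
  have heq : (fun p => ∫ x, ‖SC.indicator gC (p, x)‖) = (Ioo (0:ℝ) 1).indicator ψC := by
    rw [← hOuterEqC]
    funext p
    exact integral_congr_ae (Filter.Eventually.of_forall fun x => norm_of_nonneg (nngC (p, x)))
  rw [heq, integrable_indicator_iff measurableSet_Ioo]
  exact ψC_intgr

lemma intgrSC : IntegrableOn gC SC volume :=
  (integrable_indicator_iff measSC).1 intC

theorem partC : (∫ q in SC, gC q) = π^2/24 := by
  rw [← integral_indicator measSC, MeasureTheory.Measure.volume_eq_prod]
  rw [integral_prod _ intC,
    integral_congr_ae (Filter.Eventually.of_forall fun p => congrFun hOuterEqC p),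
    integral_indicator measurableSet_Ioo]
  exact ψC_val


def FA : ℝ × ℝ → ℝ := fun q =>
  1 / ((|q.2| + |q.2 - q.1|) * (|q.2| + |q.2 - 1|) * (|q.2 - q.1| + |q.2 - 1|))
def SA : Set (ℝ × ℝ) := {q | 0 < q.1 ∧ q.1 < 1}
def A1 : Set (ℝ × ℝ) := {q | 0 < q.1 ∧ q.1 < 1 ∧ q.2 < 0}
def A2 : Set (ℝ × ℝ) := {q | q.1 < 1 ∧ 0 < q.2 ∧ q.2 < q.1}
def TA : ℝ × ℝ → ℝ × ℝ := fun q => (1 - q.1, 1 - q.2)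

lemma measA1 : MeasurableSet A1 := by
  have h1 : MeasurableSet {q : ℝ×ℝ | 0 < q.1} := measurableSet_lt measurable_const measurable_fst
  have h2 : MeasurableSet {q : ℝ×ℝ | q.1 < 1} := measurableSet_lt measurable_fst measurable_const
  have h3 : MeasurableSet {q : ℝ×ℝ | q.2 < 0} := measurableSet_lt measurable_snd measurable_const
  exact (h1.inter (h2.inter h3) : _)

lemma measA2 : MeasurableSet A2 := by
  have h1 : MeasurableSet {q : ℝ×ℝ | q.1 < 1} := measurableSet_lt measurable_fst measurable_const
  have h2 : MeasurableSet {q : ℝ×ℝ | 0 < q.2} := measurableSet_lt measurable_const measurable_snd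
  have h3 : MeasurableSet {q : ℝ×ℝ | q.2 < q.1} := measurableSet_lt measurable_snd measurable_fst
  exact (h1.inter (h2.inter h3) : _)

lemma mpT : MeasurePreserving TA (volume : Measure (ℝ×ℝ)) volume :=
  (Measure.measurePreserving_sub_left volume 1).prod
    (Measure.measurePreserving_sub_left volume 1)

lemma embT : MeasurableEmbedding TA :=
  (MeasurableEquiv.prodCongr (MeasurableEquiv.subLeft (1:ℝ))
    (MeasurableEquiv.subLeft (1:ℝ))).measurableEmbedding

lemma FT : (fun q => FA (TA q)) = FA := by
  funext q
  obtain ⟨p, x⟩ := q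
  simp only [FA, TA]
  rw [show (1:ℝ) - x - (1 - p) = -(x - p) by ring, show (1:ℝ) - x - 1 = -x by ring,
    show (1:ℝ) - x = -(x - 1) by ring, abs_neg, abs_neg, abs_neg]
  ring_nf

lemma trans_int (S : Set (ℝ×ℝ)) : ∫ q in TA ⁻¹' S, FA q = ∫ q in S, FA q := by
  have h := mpT.setIntegral_preimage_emb embT FA S
  rwa [show (fun q => FA (TA q)) = FA from FT] at h

lemma trans_intgr (S : Set (ℝ×ℝ)) (h : IntegrableOn FA S volume) :
    IntegrableOn FA (TA ⁻¹' S) volume := by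
  have h2 := (mpT.integrableOn_comp_preimage embT (f := FA) (s := S)).2 h
  rwa [show (FA ∘ TA) = FA from FT] at h2

lemma preT3 : TA ⁻¹' SB = A2 := by
  ext ⟨p, x⟩
  simp only [mem_preimage, TA, SB, A2, mem_setOf_eq]
  constructor <;> rintro ⟨h1, h2, h3⟩ <;> refine ⟨by linarith, by linarith, by linarith⟩

lemma preT4 : TA ⁻¹' SC = A1 := by
  ext ⟨p, x⟩
  simp only [mem_preimage, TA, SC, A1, mem_setOf_eq]
  constructor <;> rintro ⟨h1, h2, h3⟩ <;> refine ⟨by linarith, by linarith, by linarith⟩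

lemma eqOnB : EqOn FA gB SB := by
  rintro ⟨p, x⟩ ⟨h1, h2, h3⟩
  simp only [FA, gB]
  dsimp only at h1 h2 h3 ⊢
  rw [abs_of_pos (show (0:ℝ) < x by linarith), abs_of_pos (show (0:ℝ) < x - p by linarith),
    abs_of_neg (show x - 1 < (0:ℝ) by linarith)]
  congr 1
  ring

lemma eqOnC : EqOn FA gC SC := by
  rintro ⟨p, x⟩ ⟨h1, h2, h3⟩
  simp only [FA, gC]
  dsimp only at h1 h2 h3 ⊢
  rw [abs_of_pos (show (0:ℝ) < x by linarith), abs_of_pos (show (0:ℝ) < x - p by linarith),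
    abs_of_pos (show (0:ℝ) < x - 1 by linarith)]
  congr 1
  ring

lemma IA3 : ∫ q in SB, FA q = π^2/8 := by
  rw [setIntegral_congr_fun measSB eqOnB]
  exact partB

lemma IA4 : ∫ q in SC, FA q = π^2/24 := by
  rw [setIntegral_congr_fun measSC eqOnC]
  exact partC

lemma IA2 : ∫ q in A2, FA q = π^2/8 := by rw [← preT3, trans_int]; exact IA3
lemma IA1 : ∫ q in A1, FA q = π^2/24 := by rw [← preT4, trans_int]; exact IA4

lemma intA3 : IntegrableOn FA SB volume := (intgrSB.congr_fun eqOnB.symm measSB : _)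
lemma intA4 : IntegrableOn FA SC volume := (intgrSC.congr_fun eqOnC.symm measSC : _)
lemma intA2 : IntegrableOn FA A2 volume := preT3 ▸ trans_intgr SB intA3
lemma intA1 : IntegrableOn FA A1 volume := preT4 ▸ trans_intgr SC intA4

lemma nullN : volume ({q : ℝ×ℝ | q.2 = 0} ∪ {q : ℝ×ℝ | q.2 = q.1} ∪ {q : ℝ×ℝ | q.2 = 1}) = 0 := by
  have hc : ∀ c : ℝ, volume {q : ℝ×ℝ | q.2 = c} = 0 := by
    intro c
    have he : {q : ℝ×ℝ | q.2 = c} = univ ×ˢ {c} := by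
      ext ⟨p, x⟩
      simp only [mem_setOf_eq, mem_prod, mem_univ, mem_singleton_iff, true_and]
    rw [he, Measure.volume_eq_prod, Measure.prod_prod]
    simp
  have hd : volume {q : ℝ×ℝ | q.2 = q.1} = 0 := by
    have hm : MeasurableSet {q : ℝ×ℝ | q.2 = q.1} := by
      have : {q : ℝ×ℝ | q.2 = q.1} = (fun q : ℝ×ℝ => q.2 - q.1) ⁻¹' {0} := by
        ext ⟨p, x⟩
        simp [sub_eq_zero]
      rw [this]
      exact (measurable_snd.sub measurable_fst) (measurableSet_singleton 0)
    rw [Measure.volume_eq_prod, Measure.prod_apply hm]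
    have : ∀ p : ℝ, (Prod.mk p ⁻¹' {q : ℝ×ℝ | q.2 = q.1}) = {p} := by
      intro p
      ext x
      simp only [mem_preimage, mem_setOf_eq, mem_singleton_iff]
    simp [this]
  refine measure_union_null (measure_union_null (hc 0) hd) (hc 1)

lemma hUsub : A1 ∪ (A2 ∪ (SB ∪ SC)) ⊆ SA := by
  rintro ⟨p, x⟩ (⟨h1, h2, h3⟩ | ⟨h1, h2, h3⟩ | ⟨h1, h2, h3⟩ | ⟨h1, h2, h3⟩) <;>
    exact ⟨by linarith, by linarith⟩

lemma hdiff : SA \ (A1 ∪ (A2 ∪ (SB ∪ SC)))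
    ⊆ {q : ℝ×ℝ | q.2 = 0} ∪ {q : ℝ×ℝ | q.2 = q.1} ∪ {q : ℝ×ℝ | q.2 = 1} := by
  rintro ⟨p, x⟩ ⟨⟨hp0, hp1⟩, hU⟩
  simp only [A1, A2, SB, SC, mem_union, mem_setOf_eq, not_or] at hU
  obtain ⟨n1, n2, n3, n4⟩ := hU
  simp only [mem_union, mem_setOf_eq]
  by_contra hN
  push_neg at hN
  obtain ⟨⟨e0, ed⟩, e1⟩ := hN
  rcases lt_trichotomy x 0 with h | h | h
  · exact n1 ⟨hp0, hp1, h⟩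
  · exact e0 h
  rcases lt_trichotomy x p with h2 | h2 | h2
  · exact n2 ⟨hp1, h, h2⟩
  · exact ed h2
  rcases lt_trichotomy x 1 with h3 | h3 | h3
  · exact n3 ⟨hp0, h2, h3⟩
  · exact e1 h3
  · exact n4 ⟨hp0, hp1, h3⟩

lemma haeU : SA =ᵐ[volume] ((A1 ∪ (A2 ∪ (SB ∪ SC))) : Set (ℝ×ℝ)) := by
  rw [ae_eq_set]
  constructor
  · exact measure_mono_null hdiff nullN
  · rw [diff_eq_empty.2 hUsub]
    simp

lemma disj12 : Disjoint A1 (A2 ∪ (SB ∪ SC)) := by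
  rw [Set.disjoint_left]
  rintro ⟨p, x⟩ ⟨_, _, h3⟩ (⟨_, h2, _⟩ | ⟨_, h2, _⟩ | ⟨_, _, h2⟩) <;> dsimp only at * <;> linarith

lemma disj23 : Disjoint A2 (SB ∪ SC) := by
  rw [Set.disjoint_left]
  rintro ⟨p, x⟩ ⟨_, _, h3⟩ (⟨_, h2, _⟩ | ⟨_, _, h2⟩) <;> dsimp only at * <;> linarith

lemma disj34 : Disjoint SB SC := by
  rw [Set.disjoint_left]
  rintro ⟨p, x⟩ ⟨_, _, h3⟩ ⟨_, _, h2⟩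
  dsimp only at *
  linarith

theorem partA : ∫ q in SA, FA q = π^2/3 := by
  rw [setIntegral_congr_set haeU,
    setIntegral_union disj12 (measA2.union (measSB.union measSC)) intA1
      (intA2.union (intA3.union intA4)),
    setIntegral_union disj23 (measSB.union measSC) intA2 (intA3.union intA4),
    setIntegral_union disj34 measSC intA3 intA4,
    IA1, IA2, IA3, IA4]
  ring

end

/-- The two-loop anomaly integral:
`∫₀¹ dp ∫_ℝ dx 1/((|x|+|x−p|)(|x|+|x−1|)(|x−p|+|x−1|)) = π²/3`.
On the region `0 < p < x < 1` the integrand simplifies and the integral contributes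
`π²/8`, and the region `0 < p < 1 < x` contributes
`∫ dp dx /((2x−p)(2x−1)(2x−1−p)) = π²/24`; the regions `x < 0` and `0 < x < p` are
obtained from these by the symmetry `x ↦ 1−x`, `p ↦ 1−p`. -/
theorem two_loop_anomaly_integral :
    (∫ q in {q : ℝ × ℝ | 0 < q.1 ∧ q.1 < 1},
        1 / ((|q.2| + |q.2 - q.1|) * (|q.2| + |q.2 - 1|) * (|q.2 - q.1| + |q.2 - 1|)))
      = π ^ 2 / 3 ∧
    (∫ q in {q : ℝ × ℝ | 0 < q.1 ∧ q.1 < q.2 ∧ q.2 < 1},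
        1 / ((2 * q.2 - q.1) * (1 - q.1))) = π ^ 2 / 8 ∧
    (∫ q in {q : ℝ × ℝ | 0 < q.1 ∧ q.1 < 1 ∧ 1 < q.2},
        1 / ((2 * q.2 - q.1) * (2 * q.2 - 1) * (2 * q.2 - 1 - q.1))) = π ^ 2 / 24 := by
  exact ⟨partA, partB, partC⟩
end

section
/- For a > 0, ∫_{−∞ < u < v < ∞} (v − u) / ((u² + a²)²(v² + a²)²) du dv = (3π/8)·a^{−5}. -/
/-!
By Fubini the integral is `∫ u, (u² + a²)⁻² T(u)`, where `T(u) = ∫_{v > u} (v - u)(v² + a²)⁻² dv`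
is elementary: `v (v² + a²)⁻²` and `(v² + a²)⁻²` have the primitives `-(v² + a²)⁻¹ / 2` and
`(v / (v² + a²) / a² + arctan (v / a) / a³) / 2`. The outer integrand again has an elementary
primitive, and the value is the difference of its limits `± 3π / (16 a⁵)` at `±∞`.
Integrability everywhere reduces to that of `(x² + a²)⁻¹`.
-/

open MeasureTheory Real Filter Set Topology

section Fubini

variable {E : Type*} [NormedAddCommGroup E] [NormedSpace ℝ E] {μ ν : Measure ℝ} [SFinite μ]
  [SFinite ν]

theorem setIntegral_setOf_fst_lt_snd {F : ℝ × ℝ → E}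
    (hF : IntegrableOn F {q | q.1 < q.2} (μ.prod ν)) :
    ∫ q in {q : ℝ × ℝ | q.1 < q.2}, F q ∂μ.prod ν = ∫ x, ∫ y in Ioi x, F (x, y) ∂ν ∂μ := by
  have hS : MeasurableSet {q : ℝ × ℝ | q.1 < q.2} :=
    measurableSet_lt measurable_fst measurable_snd
  rw [← integral_indicator hS, integral_prod _ (hF.integrable_indicator hS)]
  congr 1 with x
  rw [← integral_indicator measurableSet_Ioi]
  rfl

end Fubini

variable {a : ℝ}

theorem hasDerivAt_arctan_div (ha : a ≠ 0) (x : ℝ) :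
    HasDerivAt (fun v => arctan (v / a)) (a / (x ^ 2 + a ^ 2)) x := by
  refine ((hasDerivAt_arctan (x / a)).comp x ((hasDerivAt_id x).div_const a)).congr_deriv ?_
  field_simp
  ring

theorem hasDerivAt_neg_inv_sq_add_sq_div_two (ha : a ≠ 0) (x : ℝ) :
    HasDerivAt (fun v => -(v ^ 2 + a ^ 2)⁻¹ / 2) (x * ((x ^ 2 + a ^ 2) ^ 2)⁻¹) x := by
  refine ((((hasDerivAt_pow 2 x).add_const (a ^ 2)).inv (by positivity)).neg.div_const
    2).congr_deriv ?_
  field_simp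
  ring

noncomputable def primitiveInvSqAddSqSq (a v : ℝ) : ℝ :=
  (v / (v ^ 2 + a ^ 2) / a ^ 2 + arctan (v / a) / a ^ 3) / 2

theorem hasDerivAt_primitiveInvSqAddSqSq (ha : a ≠ 0) (x : ℝ) :
    HasDerivAt (primitiveInvSqAddSqSq a) ((x ^ 2 + a ^ 2) ^ 2)⁻¹ x := by
  have hx : x ^ 2 + a ^ 2 ≠ 0 := by positivity
  refine (((((hasDerivAt_id' x).div ((hasDerivAt_pow 2 x).add_const (a ^ 2)) hx).div_const
    (a ^ 2)).add ((hasDerivAt_arctan_div ha x).div_const (a ^ 3))).div_const 2).congr_deriv ?_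
  field_simp
  ring

theorem tendsto_inv_sq_add_sq_cocompact (a : ℝ) :
    Tendsto (fun x : ℝ => (x ^ 2 + a ^ 2)⁻¹) (cocompact ℝ) (𝓝 0) := by
  have hsq : Tendsto (fun x : ℝ => x ^ 2) (cocompact ℝ) atTop := by
    simpa only [Function.comp_def, norm_eq_abs, sq_abs] using
      (tendsto_pow_atTop two_ne_zero).comp (tendsto_norm_cocompact_atTop (E := ℝ))
  exact tendsto_inv_atTop_zero.comp (tendsto_atTop_add_const_right _ _ hsq)

theorem tendsto_div_sq_add_sq_cocompact (a : ℝ) :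
    Tendsto (fun x : ℝ => x / (x ^ 2 + a ^ 2)) (cocompact ℝ) (𝓝 0) := by
  refine squeeze_zero_norm (fun x => ?_)
    (tendsto_inv_atTop_zero.comp tendsto_norm_cocompact_atTop)
  rcases eq_or_ne x 0 with rfl | hx
  · simp
  have hx2 : 0 < x ^ 2 := by positivity
  calc ‖x / (x ^ 2 + a ^ 2)‖ = |x| / (x ^ 2 + a ^ 2) := by
        rw [norm_div, norm_eq_abs, norm_of_nonneg (by positivity)]
    _ ≤ |x| / x ^ 2 := by gcongr; nlinarith [sq_nonneg a]
    _ = ‖x‖⁻¹ := by rw [← sq_abs, norm_eq_abs, sq, div_mul_cancel_left₀ (abs_ne_zero.2 hx)]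

theorem abs_arctan_le_pi_div_two (x : ℝ) : |arctan x| ≤ π / 2 :=
  abs_le.2 ⟨(neg_pi_div_two_lt_arctan x).le, (arctan_lt_pi_div_two x).le⟩

theorem tendsto_inv_sq_add_sq_mul_arctan_div_cocompact (a : ℝ) :
    Tendsto (fun x : ℝ => (x ^ 2 + a ^ 2)⁻¹ * arctan (x / a)) (cocompact ℝ) (𝓝 0) :=
  (tendsto_inv_sq_add_sq_cocompact a).zero_mul_isBoundedUnder_le
    (isBoundedUnder_of ⟨π / 2, fun _ => abs_arctan_le_pi_div_two _⟩)

theorem tendsto_arctan_div_atTop (ha : 0 < a) :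
    Tendsto (fun x : ℝ => arctan (x / a)) atTop (𝓝 (π / 2)) :=
  (tendsto_nhds_of_tendsto_nhdsWithin tendsto_arctan_atTop).comp
    (tendsto_id.atTop_div_const ha)

theorem tendsto_arctan_div_atBot (ha : 0 < a) :
    Tendsto (fun x : ℝ => arctan (x / a)) atBot (𝓝 (-(π / 2))) :=
  (tendsto_nhds_of_tendsto_nhdsWithin tendsto_arctan_atBot).comp
    (tendsto_id.atBot_div_const ha)

theorem tendsto_primitiveInvSqAddSqSq_atTop (ha : 0 < a) :
    Tendsto (primitiveInvSqAddSqSq a) atTop (𝓝 (π / (4 * a ^ 3))) := by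
  have h := ((((tendsto_div_sq_add_sq_cocompact a).mono_left atTop_le_cocompact).div_const
    (a ^ 2)).add ((tendsto_arctan_div_atTop ha).div_const (a ^ 3))).div_const 2
  rw [show π / (4 * a ^ 3) = (0 / a ^ 2 + π / 2 / a ^ 3) / 2 by ring]
  exact h

theorem tendsto_primitiveInvSqAddSqSq_atBot (ha : 0 < a) :
    Tendsto (primitiveInvSqAddSqSq a) atBot (𝓝 (-(π / (4 * a ^ 3)))) := by
  have h := ((((tendsto_div_sq_add_sq_cocompact a).mono_left atBot_le_cocompact).div_const
    (a ^ 2)).add ((tendsto_arctan_div_atBot ha).div_const (a ^ 3))).div_const 2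
  rw [show -(π / (4 * a ^ 3)) = (0 / a ^ 2 + -(π / 2) / a ^ 3) / 2 by ring]
  exact h

theorem abs_div_sq_add_sq_le (ha : a ≠ 0) (x : ℝ) : |x / (x ^ 2 + a ^ 2)| ≤ (2 * |a|)⁻¹ := by
  have hx : 0 < x ^ 2 + a ^ 2 := by positivity
  rw [abs_div, abs_of_pos hx, div_le_iff₀ hx, inv_mul_eq_div, le_div_iff₀ (by positivity)]
  nlinarith [sq_nonneg (|x| - |a|), sq_abs x, sq_abs a]

theorem integrable_inv_sq_add_sq (ha : a ≠ 0) : Integrable fun x : ℝ => (x ^ 2 + a ^ 2)⁻¹ := by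
  refine ((integrable_inv_one_add_sq.comp_div ha).div_const (a ^ 2)).congr
    (ae_of_all _ fun x => ?_)
  field_simp
  ring

theorem integrable_inv_sq_add_sq_mul {f : ℝ → ℝ} (ha : a ≠ 0) (hf : AEStronglyMeasurable f)
    {c : ℝ} (hfc : ∀ x, |f x| ≤ c) : Integrable fun x : ℝ => f x * (x ^ 2 + a ^ 2)⁻¹ :=
  (integrable_inv_sq_add_sq ha).bdd_mul hf (ae_of_all _ hfc)

theorem integrable_inv_sq_add_sq_sq (ha : a ≠ 0) :
    Integrable fun x : ℝ => ((x ^ 2 + a ^ 2) ^ 2)⁻¹ := by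
  refine (integrable_inv_sq_add_sq_mul ha (f := fun x => (x ^ 2 + a ^ 2)⁻¹) (c := (a ^ 2)⁻¹)
    (by fun_prop) fun x => ?_).congr (ae_of_all _ fun x => by dsimp only; rw [← inv_pow]; ring)
  rw [abs_of_nonneg (by positivity)]
  exact inv_anti₀ (by positivity) (le_add_of_nonneg_left (sq_nonneg x))

theorem integrable_mul_inv_sq_add_sq_sq (ha : a ≠ 0) :
    Integrable fun x : ℝ => x * ((x ^ 2 + a ^ 2) ^ 2)⁻¹ :=
  (integrable_inv_sq_add_sq_mul ha
    (by fun_prop : Measurable fun x : ℝ => x / (x ^ 2 + a ^ 2)).aestronglyMeasurable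
    (abs_div_sq_add_sq_le ha)).congr (ae_of_all _ fun x => by dsimp only; rw [← inv_pow]; ring)

noncomputable def tailMoment (a u : ℝ) : ℝ :=
  1 / (2 * a ^ 2) - π / (4 * a ^ 3) * u + u * arctan (u / a) / (2 * a ^ 3)

theorem integral_Ioi_sub_mul_inv_sq_add_sq_sq (ha : 0 < a) (u : ℝ) :
    ∫ v in Ioi u, (v - u) * ((v ^ 2 + a ^ 2) ^ 2)⁻¹ = tailMoment a u := by
  rw [integral_Ioi_of_hasDerivAt_of_nonneg'
    (g := fun v => -(v ^ 2 + a ^ 2)⁻¹ / 2 - u * primitiveInvSqAddSqSq a v)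
    (fun x _ => ((hasDerivAt_neg_inv_sq_add_sq_div_two ha.ne' x).sub
      ((hasDerivAt_primitiveInvSqAddSqSq ha.ne' x).const_mul u)).congr_deriv (by ring))
    (fun v hv => mul_nonneg (sub_nonneg.2 (le_of_lt hv)) (by positivity))
    ((((tendsto_inv_sq_add_sq_cocompact a).mono_left atTop_le_cocompact).neg.div_const 2).sub
      ((tendsto_primitiveInvSqAddSqSq_atTop ha).const_mul u))]
  simp only [tailMoment, primitiveInvSqAddSqSq]
  field_simp
  ring

theorem integrable_inv_sq_add_sq_sq_mul_tailMoment (ha : a ≠ 0) :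
    Integrable fun u : ℝ => ((u ^ 2 + a ^ 2) ^ 2)⁻¹ * tailMoment a u := by
  have harctan : Integrable fun u : ℝ => arctan (u / a) * (u * ((u ^ 2 + a ^ 2) ^ 2)⁻¹) :=
    (integrable_mul_inv_sq_add_sq_sq ha).bdd_mul (c := π / 2) (by fun_prop)
      (ae_of_all _ fun _ => abs_arctan_le_pi_div_two _)
  refine (((integrable_inv_sq_add_sq_sq ha).const_mul (1 / (2 * a ^ 2))).sub
    ((integrable_mul_inv_sq_add_sq_sq ha).const_mul (π / (4 * a ^ 3)))).add
    (harctan.div_const (2 * a ^ 3)) |>.congr (ae_of_all _ fun u => ?_)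
  simp only [tailMoment, Pi.add_apply, Pi.sub_apply]
  ring

-- The `u · arctan (u / a)` part of `tailMoment` is integrated by parts against `(u² + a²)⁻²`.
noncomputable def framingPrimitive (a u : ℝ) : ℝ :=
  3 / (4 * a ^ 2) * primitiveInvSqAddSqSq a u
    + (u ^ 2 + a ^ 2)⁻¹ * (π / (8 * a ^ 3) - arctan (u / a) / (4 * a ^ 3))

theorem hasDerivAt_framingPrimitive (ha : a ≠ 0) (x : ℝ) :
    HasDerivAt (framingPrimitive a) (((x ^ 2 + a ^ 2) ^ 2)⁻¹ * tailMoment a x) x := by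
  have hx : x ^ 2 + a ^ 2 ≠ 0 := by positivity
  refine (((hasDerivAt_primitiveInvSqAddSqSq ha x).const_mul (3 / (4 * a ^ 2))).add
    ((((hasDerivAt_pow 2 x).add_const (a ^ 2)).inv hx).mul
      (((hasDerivAt_arctan_div ha x).div_const (4 * a ^ 3)).const_sub
        (π / (8 * a ^ 3))))).congr_deriv ?_
  simp only [tailMoment, Pi.inv_apply]
  field_simp
  ring

theorem tendsto_framingPrimitive_of_le_cocompact {l : Filter ℝ} (hl : l ≤ cocompact ℝ) {c : ℝ}
    (h : Tendsto (primitiveInvSqAddSqSq a) l (𝓝 c)) :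
    Tendsto (framingPrimitive a) l (𝓝 (3 / (4 * a ^ 2) * c)) := by
  have h0 := (((tendsto_inv_sq_add_sq_cocompact a).const_mul (π / (8 * a ^ 3))).sub
    ((tendsto_inv_sq_add_sq_mul_arctan_div_cocompact a).div_const (4 * a ^ 3))).mono_left hl
  convert (h.const_mul (3 / (4 * a ^ 2))).add h0 using 2
  · unfold framingPrimitive
    ring
  · ring

theorem integral_inv_sq_add_sq_sq_mul_tailMoment (ha : 0 < a) :
    ∫ u, ((u ^ 2 + a ^ 2) ^ 2)⁻¹ * tailMoment a u = 3 * π / 8 / a ^ 5 := by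
  rw [integral_of_hasDerivAt_of_tendsto (hasDerivAt_framingPrimitive ha.ne')
    (integrable_inv_sq_add_sq_sq_mul_tailMoment ha.ne')
    (tendsto_framingPrimitive_of_le_cocompact atBot_le_cocompact
      (tendsto_primitiveInvSqAddSqSq_atBot ha))
    (tendsto_framingPrimitive_of_le_cocompact atTop_le_cocompact
      (tendsto_primitiveInvSqAddSqSq_atTop ha))]
  field_simp
  ring

/-- The framing-anomaly integral: for `a > 0`,
`∫_{u < v} (v − u)/((u²+a²)²(v²+a²)²) du dv = (3π/8)·a⁻⁵`. -/
theorem framing_anomaly_integral (a : ℝ) (ha : 0 < a) :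
    (∫ q in {q : ℝ × ℝ | q.1 < q.2},
        (q.2 - q.1) / ((q.1 ^ 2 + a ^ 2) ^ 2 * (q.2 ^ 2 + a ^ 2) ^ 2))
      = 3 * π / 8 / a ^ 5 := by
  have hg := integrable_inv_sq_add_sq_sq ha.ne'
  have hxg := integrable_mul_inv_sq_add_sq_sq ha.ne'
  have hint : Integrable (fun q : ℝ × ℝ =>
      (q.2 - q.1) / ((q.1 ^ 2 + a ^ 2) ^ 2 * (q.2 ^ 2 + a ^ 2) ^ 2)) (volume.prod volume) :=
    ((hg.mul_prod hxg).sub (hxg.mul_prod hg)).congr (ae_of_all _ fun q => by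
      simp only [Pi.sub_apply]
      rw [div_eq_mul_inv, mul_inv]
      ring)
  rw [Measure.volume_eq_prod, setIntegral_setOf_fst_lt_snd hint.integrableOn]
  calc ∫ u, ∫ v in Ioi u, (v - u) / ((u ^ 2 + a ^ 2) ^ 2 * (v ^ 2 + a ^ 2) ^ 2)
      = ∫ u, ((u ^ 2 + a ^ 2) ^ 2)⁻¹ * tailMoment a u := by
        congr 1 with u
        rw [← integral_Ioi_sub_mul_inv_sq_add_sq_sq ha u, ← integral_const_mul]
        congr 1 with v
        rw [div_eq_mul_inv, mul_inv]
        ring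
    _ = 3 * π / 8 / a ^ 5 := integral_inv_sq_add_sq_sq_mul_tailMoment ha
end
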